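/- arXiv:1511.03633 — 3 statements merged into one kernel-verified Lean document; each statement's English description precedes it below -/
import Mathlib

section
/- Let λ > 0 and f ∈ C⁰[a,b]. Suppose P = [a = t₀ < t₁ < ⋯ < t_k < t_{k+1} = b] is a partition of [a,b] such that Φ_{[a,b],λ,P}(f) ≥ Φ_{[a,b],λ,Q}(f) for every partition Q with |Q| ≤ |P|. Then: (a) if a < t_{j−1} and [t_{j−1},t_j] is an uptick (resp. downtick), then f attains its minimum (resp. maximum) on [t_{j−1},t_j] at t_{j−1}; (b) if t_j < b and [t_{j−1},t_j] is an uptick (resp. downtick), then f attains its maximum (resp. minimum) on [t_{j−1},t_j] at t_j. -/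
open scoped BigOperators ENNReal
open MeasureTheory Set Filter

/-- A partition `a = t₀ < t₁ < ⋯ < t_k < t_{k+1} = b` of `[a,b]` with `k` interior points. -/
structure RTVPartition (a b : ℝ) where
  k : ℕ
  t : ℕ → ℝ
  ht0 : t 0 = a
  htlast : t (k + 1) = b
  hmono : ∀ i, i ≤ k → t i < t (i + 1)

/-- `Φ_{[a,b],λ,P}(f) = ∑_{i=1}^{k+1} |f(t_i) − f(t_{i−1})| − λ·|P|`. -/
noncomputable def phiP (lam a b : ℝ) (f : ℝ → ℝ) (P : RTVPartition a b) : ℝ :=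
  (∑ i ∈ Finset.range (P.k + 1), |f (P.t (i + 1)) - f (P.t i)|) - lam * P.k

/-- The regularized total variation `Φ_{[a,b],λ}(f) = sup_P Φ_{[a,b],λ,P}(f)`. -/
noncomputable def phiRTV (lam a b : ℝ) (f : ℝ → ℝ) : ℝ :=
  ⨆ P : RTVPartition a b, phiP lam a b f P

/-!
An optimal partition cannot be improved by deleting an interior point `t_{m+1}` (which gains
`λ`), so `f (t_{m+1})` is a strict peak or valley of `f (t_m), f (t_{m+1}), f (t_{m+2})`; nor by
moving `t_{m+1}` to some `x ∈ (t_m, t_{m+2})`, so at a peak `f x ≤ f (t_{m+1})` and at a valley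
`f (t_{m+1}) ≤ f x`. Both parts of the theorem concern an interior endpoint of `[t_{j-1}, t_j]`,
and `-f` turns downticks into upticks.
-/

lemma Finset.sum_range_add_two {M : Type*} [AddCommMonoid M] (F : ℕ → M) (m r : ℕ) :
    ∑ i ∈ Finset.range (m + 2 + r), F i
      = ∑ i ∈ Finset.range m, F i + F m + F (m + 1) + ∑ i ∈ Finset.range r, F (m + 2 + i) := by
  rw [Finset.sum_range_add, Finset.sum_range_succ, Finset.sum_range_succ]

lemma Finset.sum_range_add_one {M : Type*} [AddCommMonoid M] (F : ℕ → M) (m r : ℕ) :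
    ∑ i ∈ Finset.range (m + 1 + r), F i
      = ∑ i ∈ Finset.range m, F i + F m + ∑ i ∈ Finset.range r, F (m + 1 + i) := by
  rw [Finset.sum_range_add, Finset.sum_range_succ]

namespace RTVPartition

variable {a b : ℝ}

lemma t_lt_t_add_two (P : RTVPartition a b) {m : ℕ} (hm : m + 1 ≤ P.k) :
    P.t m < P.t (m + 2) :=
  (P.hmono m (by omega)).trans (P.hmono (m + 1) hm)

def movePoint (P : RTVPartition a b) {m : ℕ} (hm : m + 1 ≤ P.k) (x : ℝ)
    (hx : x ∈ Ioo (P.t m) (P.t (m + 2))) : RTVPartition a b where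
  k := P.k
  t := Function.update P.t (m + 1) x
  ht0 := by rw [Function.update_of_ne (by omega), P.ht0]
  htlast := by rw [Function.update_of_ne (by omega), P.htlast]
  hmono i hi := by
    by_cases him : i = m
    · subst him
      rw [Function.update_self, Function.update_of_ne (by omega)]
      exact hx.1
    by_cases him' : i = m + 1
    · subst him'
      rw [Function.update_self, Function.update_of_ne (by omega)]
      exact hx.2
    rw [Function.update_of_ne him', Function.update_of_ne (by omega)]
    exact P.hmono i hi

def erasePoint (P : RTVPartition a b) {m : ℕ} (hm : m + 1 ≤ P.k) : RTVPartition a b where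
  k := P.k - 1
  t i := if i ≤ m then P.t i else P.t (i + 1)
  ht0 := by rw [if_pos (Nat.zero_le m), P.ht0]
  htlast := by rw [if_neg (by omega), show P.k - 1 + 1 + 1 = P.k + 1 by omega, P.htlast]
  hmono i hi := by
    by_cases him : i + 1 ≤ m
    · rw [if_pos (by omega), if_pos him]
      exact P.hmono i (by omega)
    by_cases him' : i = m
    · subst him'
      rw [if_pos le_rfl, if_neg him]
      exact P.t_lt_t_add_two hm
    rw [if_neg (by omega), if_neg him]
    exact P.hmono (i + 1) (by omega)

variable (lam : ℝ) (f : ℝ → ℝ)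

lemma phiP_movePoint (P : RTVPartition a b) {m : ℕ} (hm : m + 1 ≤ P.k) (x : ℝ)
    (hx : x ∈ Ioo (P.t m) (P.t (m + 2))) :
    phiP lam a b f (P.movePoint hm x hx) = phiP lam a b f P
      - |f (P.t (m + 1)) - f (P.t m)| - |f (P.t (m + 2)) - f (P.t (m + 1))|
      + |f x - f (P.t m)| + |f (P.t (m + 2)) - f x| := by
  obtain ⟨r, hr⟩ : ∃ r, P.k + 1 = m + 2 + r := ⟨P.k - m - 1, by omega⟩
  simp only [phiP, movePoint, hr, Finset.sum_range_add_two]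
  have hlow : ∑ i ∈ Finset.range m, |f (Function.update P.t (m + 1) x (i + 1))
      - f (Function.update P.t (m + 1) x i)|
      = ∑ i ∈ Finset.range m, |f (P.t (i + 1)) - f (P.t i)| := by
    refine Finset.sum_congr rfl fun i hi => ?_
    rw [Finset.mem_range] at hi
    rw [Function.update_of_ne (by omega), Function.update_of_ne (by omega)]
  have hhigh : ∑ i ∈ Finset.range r, |f (Function.update P.t (m + 1) x (m + 2 + i + 1))
      - f (Function.update P.t (m + 1) x (m + 2 + i))|
      = ∑ i ∈ Finset.range r, |f (P.t (m + 2 + i + 1)) - f (P.t (m + 2 + i))| := by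
    refine Finset.sum_congr rfl fun i _ => ?_
    rw [Function.update_of_ne (by omega), Function.update_of_ne (by omega)]
  rw [hlow, hhigh, Function.update_self, Function.update_of_ne (by omega : m ≠ m + 1),
    Function.update_of_ne (by omega : m + 1 + 1 ≠ m + 1)]
  ring

lemma phiP_erasePoint (P : RTVPartition a b) {m : ℕ} (hm : m + 1 ≤ P.k) :
    phiP lam a b f (P.erasePoint hm) = phiP lam a b f P + lam
      - |f (P.t (m + 1)) - f (P.t m)| - |f (P.t (m + 2)) - f (P.t (m + 1))|
      + |f (P.t (m + 2)) - f (P.t m)| := by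
  obtain ⟨r, hr⟩ : ∃ r, P.k = m + 1 + r := ⟨P.k - m - 1, by omega⟩
  simp only [phiP, erasePoint, hr, show m + 1 + r - 1 = m + r by omega]
  rw [show m + r + 1 = m + 1 + r by omega, show m + 1 + r + 1 = m + 2 + r by omega,
    Finset.sum_range_add_one, Finset.sum_range_add_two]
  have hlow : ∑ i ∈ Finset.range m, |f (if i + 1 ≤ m then P.t (i + 1) else P.t (i + 1 + 1))
      - f (if i ≤ m then P.t i else P.t (i + 1))|
      = ∑ i ∈ Finset.range m, |f (P.t (i + 1)) - f (P.t i)| := by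
    refine Finset.sum_congr rfl fun i hi => ?_
    rw [Finset.mem_range] at hi
    rw [if_pos (by omega), if_pos (by omega)]
  have hhigh : ∑ i ∈ Finset.range r, |f (if m + 1 + i + 1 ≤ m then P.t (m + 1 + i + 1)
      else P.t (m + 1 + i + 1 + 1)) - f (if m + 1 + i ≤ m then P.t (m + 1 + i)
      else P.t (m + 1 + i + 1))|
      = ∑ i ∈ Finset.range r, |f (P.t (m + 2 + i + 1)) - f (P.t (m + 2 + i))| := by
    refine Finset.sum_congr rfl fun i _ => ?_
    rw [if_neg (by omega), if_neg (by omega), show m + 1 + i + 1 = m + 2 + i by omega]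
  rw [hlow, hhigh, if_pos le_rfl, if_neg (by omega)]
  push_cast
  ring

lemma phiP_neg (P : RTVPartition a b) : phiP lam a b (-f) P = phiP lam a b f P := by
  simp only [phiP, Pi.neg_apply, neg_sub_neg, abs_sub_comm]

def IsOptimal (P : RTVPartition a b) : Prop :=
  ∀ Q : RTVPartition a b, Q.k ≤ P.k → phiP lam a b f Q ≤ phiP lam a b f P

variable {lam f} {P : RTVPartition a b} {m : ℕ}

lemma IsOptimal.neg (hP : P.IsOptimal lam f) : P.IsOptimal lam (-f) := fun Q hQ => by
  simpa only [phiP_neg] using hP Q hQ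

lemma IsOptimal.lam_add_abs_le (hP : P.IsOptimal lam f) (hm : m + 1 ≤ P.k) :
    lam + |f (P.t (m + 2)) - f (P.t m)|
      ≤ |f (P.t (m + 1)) - f (P.t m)| + |f (P.t (m + 2)) - f (P.t (m + 1))| := by
  have h := hP (P.erasePoint hm) (Nat.sub_le _ _)
  rw [phiP_erasePoint] at h
  linarith

lemma IsOptimal.abs_add_abs_le (hP : P.IsOptimal lam f) (hm : m + 1 ≤ P.k) {x : ℝ}
    (hx : x ∈ Ioo (P.t m) (P.t (m + 2))) :
    |f x - f (P.t m)| + |f (P.t (m + 2)) - f x|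
      ≤ |f (P.t (m + 1)) - f (P.t m)| + |f (P.t (m + 2)) - f (P.t (m + 1))| := by
  have h := hP (P.movePoint hm x hx) le_rfl
  rw [phiP_movePoint] at h
  linarith

lemma IsOptimal.lt_iff_lt (hP : P.IsOptimal lam f) (hlam : 0 < lam) (hm : m + 1 ≤ P.k) :
    f (P.t m) < f (P.t (m + 1)) ↔ f (P.t (m + 2)) < f (P.t (m + 1)) := by
  have h := hP.lam_add_abs_le hm
  constructor
  · intro hup
    by_contra! hmono
    rw [abs_of_pos (sub_pos.2 hup), abs_of_nonneg (sub_nonneg.2 hmono),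
      abs_of_pos (by linarith : 0 < f (P.t (m + 2)) - f (P.t m))] at h
    linarith
  · intro hdown
    by_contra! hmono
    rw [abs_of_nonpos (sub_nonpos.2 hmono), abs_of_neg (sub_neg.2 hdown),
      abs_of_neg (by linarith : f (P.t (m + 2)) - f (P.t m) < 0)] at h
    linarith

lemma IsOptimal.isMaxOn (hP : P.IsOptimal lam f) (hlam : 0 < lam) (hm : m + 1 ≤ P.k)
    (hpeak : f (P.t m) < f (P.t (m + 1)) ∨ f (P.t (m + 2)) < f (P.t (m + 1))) :
    IsMaxOn f (Icc (P.t m) (P.t (m + 2))) (P.t (m + 1)) := by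
  obtain ⟨hleft, hright⟩ : f (P.t m) < f (P.t (m + 1)) ∧ f (P.t (m + 2)) < f (P.t (m + 1)) := by
    have := hP.lt_iff_lt hlam hm
    tauto
  rw [isMaxOn_iff]
  rintro x ⟨hx₁, hx₂⟩
  rcases hx₁.eq_or_lt with rfl | hx₁
  · exact hleft.le
  rcases hx₂.eq_or_lt with rfl | hx₂
  · exact hright.le
  have h := hP.abs_add_abs_le hm ⟨hx₁, hx₂⟩
  rw [abs_of_pos (sub_pos.2 hleft), abs_of_neg (sub_neg.2 hright)] at h
  linarith [le_abs_self (f x - f (P.t m)), neg_abs_le (f (P.t (m + 2)) - f x)]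

lemma IsOptimal.isMinOn (hP : P.IsOptimal lam f) (hlam : 0 < lam) (hm : m + 1 ≤ P.k)
    (hvalley : f (P.t (m + 1)) < f (P.t m) ∨ f (P.t (m + 1)) < f (P.t (m + 2))) :
    IsMinOn f (Icc (P.t m) (P.t (m + 2))) (P.t (m + 1)) := by
  simpa using (hP.neg.isMaxOn hlam hm (by simpa using hvalley)).neg

end RTVPartition

theorem optimal_partition_minmax_general (lam a b : ℝ) (hlam : 0 < lam) (f : ℝ → ℝ)
    (P : RTVPartition a b)
    (hopt : ∀ Q : RTVPartition a b, Q.k ≤ P.k → phiP lam a b f Q ≤ phiP lam a b f P)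
    (j : ℕ) (hj1 : 1 ≤ j) (hjk : j ≤ P.k + 1) :
    (a < P.t (j - 1) →
      (f (P.t (j - 1)) < f (P.t j) →
        ∀ x ∈ Icc (P.t (j - 1)) (P.t j), f (P.t (j - 1)) ≤ f x) ∧
      (f (P.t j) < f (P.t (j - 1)) →
        ∀ x ∈ Icc (P.t (j - 1)) (P.t j), f x ≤ f (P.t (j - 1)))) ∧
    (P.t j < b →
      (f (P.t (j - 1)) < f (P.t j) →
        ∀ x ∈ Icc (P.t (j - 1)) (P.t j), f x ≤ f (P.t j)) ∧
      (f (P.t j) < f (P.t (j - 1)) →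
        ∀ x ∈ Icc (P.t (j - 1)) (P.t j), f (P.t j) ≤ f x)) := by
  have hP : P.IsOptimal lam f := hopt
  refine ⟨fun ha => ?_, fun hb => ?_⟩
  · obtain ⟨m, rfl⟩ : ∃ m, j = m + 2 := by
      have : j ≠ 1 := by rintro rfl; exact ha.ne P.ht0.symm
      exact ⟨j - 2, by omega⟩
    have hm : m + 1 ≤ P.k := by omega
    have hsub : Icc (P.t (m + 1)) (P.t (m + 2)) ⊆ Icc (P.t m) (P.t (m + 2)) :=
      Icc_subset_Icc_left (P.hmono m (by omega)).le
    exact ⟨fun hup => isMinOn_iff.mp ((hP.isMinOn hlam hm (.inr hup)).on_subset hsub),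
      fun hdown => isMaxOn_iff.mp ((hP.isMaxOn hlam hm (.inr hdown)).on_subset hsub)⟩
  · obtain ⟨m, rfl⟩ : ∃ m, j = m + 1 := ⟨j - 1, by omega⟩
    have hm : m + 1 ≤ P.k := by
      have : m + 1 ≠ P.k + 1 := by rintro h; rw [h, P.htlast] at hb; exact hb.false
      omega
    have hsub : Icc (P.t m) (P.t (m + 1)) ⊆ Icc (P.t m) (P.t (m + 2)) :=
      Icc_subset_Icc_right (P.hmono (m + 1) hm).le
    exact ⟨fun hup => isMaxOn_iff.mp ((hP.isMaxOn hlam hm (.inl hup)).on_subset hsub),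
      fun hdown => isMinOn_iff.mp ((hP.isMinOn hlam hm (.inl hdown)).on_subset hsub)⟩

/-- If `P` maximizes `Φ_{[a,b],λ,·}(f)` among partitions `Q` with `|Q| ≤ |P|`, then:
(a) if `a < t_{j−1}` and `[t_{j−1},t_j]` is an uptick (resp. downtick), `f` attains its
minimum (resp. maximum) on `[t_{j−1},t_j]` at `t_{j−1}`; (b) if `t_j < b` and `[t_{j−1},t_j]`
is an uptick (resp. downtick), `f` attains its maximum (resp. minimum) on `[t_{j−1},t_j]`
at `t_j`. -/
theorem optimal_partition_minmax (lam a b : ℝ) (hlam : 0 < lam) (f : ℝ → ℝ)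
    (hf : ContinuousOn f (Icc a b)) (P : RTVPartition a b)
    (hopt : ∀ Q : RTVPartition a b, Q.k ≤ P.k → phiP lam a b f Q ≤ phiP lam a b f P)
    (j : ℕ) (hj1 : 1 ≤ j) (hjk : j ≤ P.k + 1) :
    (a < P.t (j - 1) →
      (f (P.t (j - 1)) < f (P.t j) →
        ∀ x ∈ Icc (P.t (j - 1)) (P.t j), f (P.t (j - 1)) ≤ f x) ∧
      (f (P.t j) < f (P.t (j - 1)) →
        ∀ x ∈ Icc (P.t (j - 1)) (P.t j), f x ≤ f (P.t (j - 1)))) ∧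
    (P.t j < b →
      (f (P.t (j - 1)) < f (P.t j) →
        ∀ x ∈ Icc (P.t (j - 1)) (P.t j), f x ≤ f (P.t j)) ∧
      (f (P.t j) < f (P.t (j - 1)) →
        ∀ x ∈ Icc (P.t (j - 1)) (P.t j), f (P.t j) ≤ f x)) :=
  optimal_partition_minmax_general lam a b hlam f P hopt j hj1 hjk
end

section
/- Let λ > 0 and f ∈ C⁰[a,b]. Suppose P = [a = t₀ < t₁ < ⋯ < t_k < t_{k+1} = b] is a partition of [a,b] such that Φ_{[a,b],λ,P}(f) ≥ Φ_{[a,b],λ,Q}(f) for every partition Q with |Q| ≤ |P|. Then for every index j with a < t_{j−1} and t_j < b, one has |f(t_j) − f(t_{j−1})| ≥ λ. -/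
open scoped BigOperators ENNReal
open MeasureTheory Set Filter

/-!
Deleting the `r` consecutive points `t_{p+1}, …, t_{p+r}` of a partition leaves a partition
with fewer points, so at an optimal partition the variation lost by the deletion is at least
`λ r`. Delete `t_{j-1}`, `t_j`, or both, and let `x, y, z` be the increments of `f` over
`[t_{j-2}, t_{j-1}]`, `[t_{j-1}, t_j]`, `[t_j, t_{j+1}]`. For `λ > 0` the two single deletions
force `x, y` and `y, z` to have opposite signs, and then the double deletion gives
`2λ ≤ |x| + |y| + |z| - |x + y + z| ≤ 2|y|`.
-/

namespace RTVPartition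

variable {a b : ℝ}

theorem strictMonoOn_t (P : RTVPartition a b) : StrictMonoOn P.t (Iic (P.k + 1)) :=
  strictMonoOn_Iic_of_lt_succ fun i hi => P.hmono i (Nat.lt_succ_iff.mp hi)

def eraseBlock (P : RTVPartition a b) (p r : ℕ) (h : p + r ≤ P.k) : RTVPartition a b where
  k := P.k - r
  t i := if i ≤ p then P.t i else P.t (i + r)
  ht0 := by simp [P.ht0]
  htlast := by
    rw [if_neg (by omega), show P.k - r + 1 + r = P.k + 1 by omega, P.htlast]
  hmono i hi := by
    rcases lt_trichotomy i p with hip | rfl | hip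
    · rw [if_pos hip.le, if_pos hip.nat_succ_le]
      exact P.hmono i (by omega)
    · rw [if_pos le_rfl, if_neg (by omega)]
      exact P.strictMonoOn_t (by simp; omega) (by simp; omega) (by omega)
    · rw [if_neg (by omega), if_neg (by omega), add_right_comm]
      exact P.hmono (i + r) (by omega)

theorem phiP_eraseBlock (lam : ℝ) (f : ℝ → ℝ) (P : RTVPartition a b) (p r : ℕ)
    (h : p + r ≤ P.k) :
    phiP lam a b f (P.eraseBlock p r h) = phiP lam a b f P
      - ∑ i ∈ Finset.range (r + 1), |f (P.t (p + i + 1)) - f (P.t (p + i))|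
      + |f (P.t (p + r + 1)) - f (P.t p)| + lam * r := by
  set g : ℕ → ℝ := fun i => |f (P.t (i + 1)) - f (P.t i)|
  set m := P.k - r - p
  have hsum_erased : ∑ i ∈ Finset.range ((P.eraseBlock p r h).k + 1),
      |f ((P.eraseBlock p r h).t (i + 1)) - f ((P.eraseBlock p r h).t i)|
      = ∑ i ∈ Finset.range p, g i + |f (P.t (p + r + 1)) - f (P.t p)|
        + ∑ i ∈ Finset.range m, g (p + r + 1 + i) := by
    simp only [eraseBlock]
    rw [show P.k - r + 1 = p + 1 + m by omega, Finset.sum_range_add, Finset.sum_range_succ]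
    congr 1
    · congr 1
      · exact Finset.sum_congr rfl fun i hi => by
          have := Finset.mem_range.mp hi
          simp only [g, if_pos this.le, if_pos this.nat_succ_le]
      · simp only [if_pos le_rfl, if_neg (by omega : ¬p + 1 ≤ p), add_right_comm p 1 r]
    · exact Finset.sum_congr rfl fun i _ => by
        simp only [g, if_neg (by omega : ¬p + 1 + i ≤ p), if_neg (by omega : ¬p + 1 + i + 1 ≤ p)]
        congr 4 <;> omega
  have hsum : ∑ i ∈ Finset.range (P.k + 1), g i
      = ∑ i ∈ Finset.range p, g i + ∑ i ∈ Finset.range (r + 1), g (p + i)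
        + ∑ i ∈ Finset.range m, g (p + r + 1 + i) := by
    rw [show P.k + 1 = p + (r + 1) + m by omega, Finset.sum_range_add, Finset.sum_range_add,
      ← add_assoc p r 1]
  have hk : ((P.eraseBlock p r h).k : ℝ) = P.k - r := by
    simp only [eraseBlock]; push_cast [Nat.cast_sub (by omega : r ≤ P.k)]; ring
  simp only [phiP]
  rw [hsum_erased, hk, hsum]
  ring

theorem lam_mul_le_of_forall_phiP_le {lam : ℝ} {f : ℝ → ℝ} {P : RTVPartition a b}
    (hopt : ∀ Q : RTVPartition a b, Q.k ≤ P.k → phiP lam a b f Q ≤ phiP lam a b f P)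
    (p r : ℕ) (h : p + r ≤ P.k) :
    lam * r ≤ ∑ i ∈ Finset.range (r + 1), |f (P.t (p + i + 1)) - f (P.t (p + i))|
      - |f (P.t (p + r + 1)) - f (P.t p)| := by
  have := hopt (P.eraseBlock p r h) (Nat.sub_le _ _)
  rw [phiP_eraseBlock] at this
  linarith

end RTVPartition

theorem le_abs_sub_of_shortcut_losses {lam u₀ u₁ u₂ u₃ : ℝ}
    (h₁ : lam ≤ |u₁ - u₀| + |u₂ - u₁| - |u₂ - u₀|)
    (h₂ : lam ≤ |u₂ - u₁| + |u₃ - u₂| - |u₃ - u₁|)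
    (h₁₂ : 2 * lam ≤ |u₁ - u₀| + |u₂ - u₁| + |u₃ - u₂| - |u₃ - u₀|) :
    lam ≤ |u₂ - u₁| := by
  rcases abs_cases (u₁ - u₀) with ⟨e1, s1⟩ | ⟨e1, s1⟩ <;>
  rcases abs_cases (u₂ - u₁) with ⟨e2, s2⟩ | ⟨e2, s2⟩ <;>
  rcases abs_cases (u₂ - u₀) with ⟨e3, s3⟩ | ⟨e3, s3⟩ <;>
  rcases abs_cases (u₃ - u₂) with ⟨e4, s4⟩ | ⟨e4, s4⟩ <;>
  rcases abs_cases (u₃ - u₁) with ⟨e5, s5⟩ | ⟨e5, s5⟩ <;>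
  rcases abs_cases (u₃ - u₀) with ⟨e6, s6⟩ | ⟨e6, s6⟩ <;>
  linarith

theorem optimal_partition_interior_jump_general (lam a b : ℝ) (f : ℝ → ℝ)
    (P : RTVPartition a b)
    (hopt : ∀ Q : RTVPartition a b, Q.k ≤ P.k → phiP lam a b f Q ≤ phiP lam a b f P)
    (j : ℕ) (hjk : j ≤ P.k + 1)
    (hleft : a < P.t (j - 1)) (hright : P.t j < b) :
    lam ≤ |f (P.t j) - f (P.t (j - 1))| := by
  have hj : j - 1 ≠ 0 := fun h => hleft.ne' (h ▸ P.ht0)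
  have hjk' : j ≠ P.k + 1 := fun h => hright.ne (h ▸ P.htlast)
  obtain ⟨p, rfl⟩ : ∃ p, j = p + 2 := ⟨j - 2, by omega⟩
  have h₁ := P.lam_mul_le_of_forall_phiP_le hopt p 1 (by omega)
  have h₂ := P.lam_mul_le_of_forall_phiP_le hopt (p + 1) 1 (by omega)
  have h₁₂ := P.lam_mul_le_of_forall_phiP_le hopt p 2 (by omega)
  simp only [Finset.sum_range_succ, Finset.sum_range_zero] at h₁ h₂ h₁₂
  norm_num [add_assoc] at h₁ h₂ h₁₂ ⊢
  exact le_abs_sub_of_shortcut_losses h₁ h₂ (by linarith)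

/-- If `P` maximizes `Φ_{[a,b],λ,·}(f)` among partitions `Q` with `|Q| ≤ |P|`, then for every
index `j` with `a < t_{j−1}` and `t_j < b`, one has `|f(t_j) − f(t_{j−1})| ≥ λ`. -/
theorem optimal_partition_interior_jump (lam a b : ℝ) (hlam : 0 < lam) (f : ℝ → ℝ)
    (hf : ContinuousOn f (Icc a b)) (P : RTVPartition a b)
    (hopt : ∀ Q : RTVPartition a b, Q.k ≤ P.k → phiP lam a b f Q ≤ phiP lam a b f P)
    (j : ℕ) (hj1 : 1 ≤ j) (hjk : j ≤ P.k + 1)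
    (hleft : a < P.t (j - 1)) (hright : P.t j < b) :
    lam ≤ |f (P.t j) - f (P.t (j - 1))| :=
  optimal_partition_interior_jump_general lam a b f P hopt j hjk hleft hright
end

section
/- Let λ > 0 and f ∈ C⁰[a,b]. Then there exists K ≥ 0 such that for every partition P of [a,b] with |P| > K there is a partition Q with |Q| ≤ |P| and Φ_{[a,b],λ,Q}(f) > Φ_{[a,b],λ,P}(f). In particular, there exists a partition P with |P| ≤ K such that Φ_{[a,b],λ,P}(f) = Φ_{[a,b],λ}(f), i.e., the supremum defining the regularized total variation is attained. -/
open scoped BigOperators ENNReal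
open MeasureTheory Set Filter

/-! Uniform continuity gives `δ > 0` with `|f x - f y| < λ / 2` whenever `|x - y| < δ`. A
partition with more than `(b - a) / δ` interior points has a step shorter than `δ`; deleting an
endpoint of that step lowers the variation by less than `λ` (triangle inequality) and saves `λ`
in the penalty.

For attainment, allow the points of a partition to coincide. For fixed `n` these weak partitions
form a compact set on which the variation is continuous, so it has a maximiser; merging
coincident points only increases `Φ`, so the maximum over each level `n` is realised by a genuine
partition with at most `n` points. The best of the levels `n ≤ (b - a) / δ` then beats every
partition, the longer ones by repeated deletion. -/

section ChainVariation

variable {α : Type*} [PseudoMetricSpace α]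

def chainVariation (g : ℕ → α) (n : ℕ) : ℝ :=
  ∑ i ∈ Finset.range n, dist (g (i + 1)) (g i)

def skipAt (m i : ℕ) : ℕ :=
  if i < m then i else i + 1

lemma monotone_skipAt (m : ℕ) : Monotone (skipAt m) := by
  intro i j hij
  unfold skipAt
  split_ifs <;> omega

lemma chainVariation_comp_skipAt_add (g : ℕ → α) {r n : ℕ} (hrn : r + 1 ≤ n) :
    chainVariation (g ∘ skipAt (r + 1)) n + dist (g (r + 1)) (g r) +
        dist (g (r + 2)) (g (r + 1)) = chainVariation g (n + 1) + dist (g (r + 2)) (g r) := by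
  induction n, hrn using Nat.le_induction with
  | base =>
    have hlow : ∀ i ∈ Finset.range r,
        dist ((g ∘ skipAt (r + 1)) (i + 1)) ((g ∘ skipAt (r + 1)) i) = dist (g (i + 1)) (g i) :=
      fun i hi => by
      have := Finset.mem_range.mp hi
      simp [skipAt, show i + 1 < r + 1 by omega, show i < r + 1 by omega]
    simp only [chainVariation, Finset.sum_range_succ, Finset.sum_congr rfl hlow]
    simp [skipAt]
    ring
  | succ n hrn ih =>
    have hn : dist ((g ∘ skipAt (r + 1)) (n + 1)) ((g ∘ skipAt (r + 1)) n)
        = dist (g (n + 2)) (g (n + 1)) := by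
      simp [skipAt, show ¬ n + 1 < r + 1 by omega, show ¬ n < r + 1 by omega]
    unfold chainVariation at ih ⊢
    rw [Finset.sum_range_succ, hn, Finset.sum_range_succ (n := n + 1)]
    linarith

lemma exists_chainVariation_sub_le_comp_skipAt (g : ℕ → α) {n j : ℕ} (hn : 1 ≤ n)
    (hj : j ≤ n) :
    ∃ m, 1 ≤ m ∧ m ≤ n ∧
      chainVariation g (n + 1) - 2 * dist (g (j + 1)) (g j) ≤
        chainVariation (g ∘ skipAt m) n := by
  rcases j with _ | r
  · refine ⟨1, le_rfl, hn, ?_⟩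
    have := chainVariation_comp_skipAt_add g hn
    have := dist_triangle (g 2) (g 0) (g 1)
    rw [dist_comm (g 0) (g 1)] at this
    linarith
  · refine ⟨r + 1, le_add_self, hj, ?_⟩
    show chainVariation g (n + 1) - 2 * dist (g (r + 2)) (g (r + 1)) ≤ _
    have := chainVariation_comp_skipAt_add g hj
    have := dist_triangle (g (r + 1)) (g (r + 2)) (g r)
    rw [dist_comm (g (r + 1)) (g (r + 2))] at this
    linarith

end ChainVariation

def IsWeakPartition (a b : ℝ) (n : ℕ) (t : ℕ → ℝ) : Prop :=
  MonotoneOn t (Iic (n + 1)) ∧ t 0 = a ∧ t (n + 1) = b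

def phiChain (lam : ℝ) (f : ℝ → ℝ) (n : ℕ) (t : ℕ → ℝ) : ℝ :=
  chainVariation (f ∘ t) (n + 1) - lam * n

section WeakPartition

variable {a b lam : ℝ} {f : ℝ → ℝ} {n : ℕ} {t : ℕ → ℝ}

lemma IsWeakPartition.mem_Icc (h : IsWeakPartition a b n t) {i : ℕ} (hi : i ≤ n + 1) :
    t i ∈ Icc a b := by
  obtain ⟨hmono, h0, hlast⟩ := h
  rw [← h0, ← hlast]
  exact ⟨hmono (Nat.zero_le _) hi (Nat.zero_le _), hmono hi self_mem_Iic hi⟩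

lemma IsWeakPartition.comp_skipAt (h : IsWeakPartition a b (n + 1) t) {m : ℕ} (hm : 1 ≤ m)
    (hmn : m ≤ n + 1) : IsWeakPartition a b n (t ∘ skipAt m) := by
  obtain ⟨hmono, h0, hlast⟩ := h
  refine ⟨hmono.comp ((monotone_skipAt m).monotoneOn _) fun i hi => ?_, ?_, ?_⟩
  · simp only [mem_Iic, skipAt] at hi ⊢
    split_ifs <;> omega
  · simpa [skipAt, show 0 < m by omega] using h0
  · simpa [skipAt, show ¬ n + 1 < m by omega] using hlast

lemma RTVPartition.isWeakPartition (P : RTVPartition a b) : IsWeakPartition a b P.k P.t :=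
  ⟨(strictMonoOn_Iic_of_lt_succ fun i hi => by
      simpa [Order.succ_eq_add_one] using P.hmono i (Nat.lt_succ_iff.mp hi)).monotoneOn,
    P.ht0, P.htlast⟩

lemma phiP_eq_phiChain (P : RTVPartition a b) : phiP lam a b f P = phiChain lam f P.k P.t := by
  simp [phiP, phiChain, chainVariation, Real.dist_eq]

theorem IsWeakPartition.exists_phiChain_le (hlam : 0 ≤ lam) (hab : a < b)
    (h : IsWeakPartition a b n t) :
    ∃ Q : RTVPartition a b, Q.k ≤ n ∧ phiChain lam f n t ≤ phiP lam a b f Q := by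
  induction n generalizing t with
  | zero =>
    refine ⟨⟨0, t, h.2.1, h.2.2, fun i hi => ?_⟩, le_rfl, ?_⟩
    · obtain rfl : i = 0 := Nat.le_zero.mp hi
      simpa [h.2.1, h.2.2] using hab
    · rw [phiP_eq_phiChain]
  | succ n ih =>
    by_cases hstrict : ∀ i ≤ n + 1, t i < t (i + 1)
    · refine ⟨⟨n + 1, t, h.2.1, h.2.2, hstrict⟩, le_rfl, ?_⟩
      rw [phiP_eq_phiChain]
    push Not at hstrict
    obtain ⟨j, hj, hstep⟩ := hstrict
    have hrep : t j = t (j + 1) :=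
      le_antisymm (h.1 (mem_Iic.2 (by omega)) (mem_Iic.2 (by omega)) j.le_succ) hstep
    obtain ⟨m, hm, hmn, hle⟩ :=
      exists_chainVariation_sub_le_comp_skipAt (f ∘ t) (by omega : 1 ≤ n + 1) hj
    obtain ⟨Q, hQk, hQ⟩ := ih (h.comp_skipAt hm hmn)
    refine ⟨Q, hQk.trans n.le_succ, le_trans ?_ hQ⟩
    simp only [phiChain, Function.comp_assoc, Function.comp_apply, hrep, dist_self, mul_zero,
      sub_zero] at hle ⊢
    push_cast
    linarith

end WeakPartition

lemma exists_sub_lt_of_sub_lt_mul {t : ℕ → ℝ} {n : ℕ} {δ : ℝ}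
    (h : t (n + 1) - t 0 < (n + 1) * δ) : ∃ j ≤ n, t (j + 1) - t j < δ := by
  have hsum : ∑ j ∈ Finset.range (n + 1), (t (j + 1) - t j)
      < ∑ _j ∈ Finset.range (n + 1), δ := by
    rw [Finset.sum_range_sub, Finset.sum_const, Finset.card_range, nsmul_eq_mul]
    exact_mod_cast h
  obtain ⟨j, hj, hlt⟩ := Finset.exists_lt_of_sum_lt hsum
  exact ⟨j, Nat.lt_succ_iff.mp (Finset.mem_range.mp hj), hlt⟩

section Descent

variable {a b lam δ : ℝ} {f : ℝ → ℝ}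

theorem exists_phiP_lt_of_lt_k (hlam : 0 < lam) (hab : a < b) (hδ : 0 < δ)
    (hδf : ∀ x ∈ Icc a b, ∀ y ∈ Icc a b, dist x y < δ → dist (f x) (f y) < lam / 2)
    (P : RTVPartition a b) (hP : (b - a) / δ < P.k) :
    ∃ Q : RTVPartition a b, Q.k < P.k ∧ phiP lam a b f P < phiP lam a b f Q := by
  have hPk : b - a < P.k * δ := (div_lt_iff₀ hδ).mp hP
  obtain ⟨n, hn⟩ : ∃ n, P.k = n + 1 :=
    Nat.exists_eq_add_one.mpr (Nat.cast_pos.mp ((div_nonneg (by linarith) hδ.le).trans_lt hP))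
  have hw : IsWeakPartition a b (n + 1) P.t := hn ▸ P.isWeakPartition
  obtain ⟨j, hj, hshort⟩ : ∃ j ≤ n + 1, P.t (j + 1) - P.t j < δ := by
    refine exists_sub_lt_of_sub_lt_mul ?_
    rw [hw.2.2, hw.2.1]
    push_cast [hn] at hPk ⊢
    linarith
  have hfshort : dist (f (P.t (j + 1))) (f (P.t j)) < lam / 2 := by
    refine hδf _ (hw.mem_Icc (by omega)) _ (hw.mem_Icc (by omega)) ?_
    rwa [Real.dist_eq, abs_of_nonneg (sub_nonneg.2 (hw.1 (mem_Iic.2 (by omega))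
      (mem_Iic.2 (by omega)) j.le_succ))]
  obtain ⟨m, hm, hmn, hle⟩ :=
    exists_chainVariation_sub_le_comp_skipAt (f ∘ P.t) (by omega : 1 ≤ n + 1) hj
  obtain ⟨Q, hQk, hQ⟩ := (hw.comp_skipAt hm hmn).exists_phiChain_le (f := f) hlam.le hab
  refine ⟨Q, by omega, lt_of_lt_of_le ?_ hQ⟩
  rw [phiP_eq_phiChain, hn]
  simp only [phiChain, Function.comp_assoc, Function.comp_apply] at hle hQ ⊢
  push_cast
  linarith

end Descent

section Attainment

variable {a b lam : ℝ} {f : ℝ → ℝ}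

theorem exists_forall_chainVariation_le (hab : a ≤ b) (hf : ContinuousOn f (Icc a b))
    (n : ℕ) :
    ∃ t, IsWeakPartition a b n t ∧ ∀ s, IsWeakPartition a b n s →
      chainVariation (f ∘ s) (n + 1) ≤ chainVariation (f ∘ t) (n + 1) := by
  -- Only the first `n + 2` coordinates matter; clamping the others to `Icc a b` makes `S` compact.
  set S := {t | IsWeakPartition a b n t} ∩ Set.univ.pi fun _ => Icc a b
  have hclosed : IsClosed {t | IsWeakPartition a b n t} :=
    isClosed_monotoneOn.inter ((isClosed_eq (continuous_apply 0) continuous_const).inter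
      (isClosed_eq (continuous_apply (n + 1)) continuous_const))
  have hcompact : IsCompact S :=
    (isCompact_univ_pi fun _ => isCompact_Icc).of_isClosed_subset
      (hclosed.inter (isClosed_set_pi fun _ _ => isClosed_Icc)) Set.inter_subset_right
  have hclamp : ∀ s, IsWeakPartition a b n s →
      (fun i => s (min i (n + 1))) ∈ S ∧
        chainVariation (f ∘ fun i => s (min i (n + 1))) (n + 1) =
          chainVariation (f ∘ s) (n + 1) := by
    intro s hs
    refine ⟨⟨⟨hs.1.comp ((monotone_id.min monotone_const).monotoneOn _) fun i _ => ?_, ?_, ?_⟩,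
      fun i _ => hs.mem_Icc (min_le_right _ _)⟩, Finset.sum_congr rfl fun i hi => ?_⟩
    · exact mem_Iic.2 (min_le_right _ _)
    · simpa using hs.2.1
    · simpa using hs.2.2
    · have := Finset.mem_range.mp hi
      simp [min_eq_left (show i ≤ n + 1 by omega), min_eq_left (show i + 1 ≤ n + 1 by omega)]
  have hne : S.Nonempty :=
    ⟨_, (hclamp (fun i => if i = 0 then a else b) ⟨fun i _ j _ hij => by
      dsimp only
      split_ifs <;> first | exact hab | exact le_rfl | omega, rfl, rfl⟩).1⟩
  have hcont : ContinuousOn (fun t => chainVariation (f ∘ t) (n + 1)) S := by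
    refine continuousOn_finsetSum _ fun i _ =>
      continuous_dist.comp_continuousOn (ContinuousOn.prodMk ?_ ?_) <;>
      exact hf.comp (continuous_apply _).continuousOn fun t ht => ht.2 _ (Set.mem_univ _)
  obtain ⟨t, ht, hmax⟩ := hcompact.exists_isMaxOn hne hcont
  exact ⟨t, ht.1, fun s hs => (hclamp s hs).2 ▸ hmax (hclamp s hs).1⟩

theorem exists_forall_k_eq_phiP_le (hlam : 0 ≤ lam) (hab : a < b)
    (hf : ContinuousOn f (Icc a b)) (n : ℕ) :
    ∃ Q : RTVPartition a b, Q.k ≤ n ∧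
      ∀ P : RTVPartition a b, P.k = n → phiP lam a b f P ≤ phiP lam a b f Q := by
  obtain ⟨t, ht, hmax⟩ := exists_forall_chainVariation_le hab.le hf n
  obtain ⟨Q, hQk, hQ⟩ := ht.exists_phiChain_le (f := f) hlam hab
  refine ⟨Q, hQk, fun P hP => ?_⟩
  rw [phiP_eq_phiChain, hP]
  exact (sub_le_sub_right (hmax _ (hP ▸ P.isWeakPartition)) _).trans hQ

theorem exists_forall_k_le_phiP_le (hlam : 0 ≤ lam) (hab : a < b)
    (hf : ContinuousOn f (Icc a b)) (N : ℕ) :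
    ∃ Q : RTVPartition a b, Q.k ≤ N ∧
      ∀ P : RTVPartition a b, P.k ≤ N → phiP lam a b f P ≤ phiP lam a b f Q := by
  induction N with
  | zero =>
    obtain ⟨Q, hQk, hQ⟩ := exists_forall_k_eq_phiP_le hlam hab hf 0
    exact ⟨Q, hQk, fun P hP => hQ P (Nat.le_zero.mp hP)⟩
  | succ N ih =>
    obtain ⟨Q₁, hQ₁k, hQ₁⟩ := ih
    obtain ⟨Q₂, hQ₂k, hQ₂⟩ := exists_forall_k_eq_phiP_le hlam hab hf (N + 1)
    rcases le_total (phiP lam a b f Q₁) (phiP lam a b f Q₂) with h | h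
    · refine ⟨Q₂, hQ₂k, fun P hP => ?_⟩
      rcases Nat.of_le_succ hP with hP | hP
      exacts [(hQ₁ P hP).trans h, hQ₂ P hP]
    · refine ⟨Q₁, hQ₁k.trans N.le_succ, fun P hP => ?_⟩
      rcases Nat.of_le_succ hP with hP | hP
      exacts [hQ₁ P hP, (hQ₂ P hP).trans h]

end Attainment

lemma forall_le_of_forall_exists_lt {ι β : Type*} [LinearOrder β] {κ : ι → ℕ} {φ : ι → β}
    {N : ℕ} {x : ι} (hx : ∀ y, κ y ≤ N → φ y ≤ φ x)
    (hdesc : ∀ y, N < κ y → ∃ z, κ z < κ y ∧ φ y < φ z) (y : ι) : φ y ≤ φ x := by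
  induction hy : κ y using Nat.strong_induction_on generalizing y with
  | _ m ih =>
    rcases le_or_gt (κ y) N with hyN | hyN
    · exact hx y hyN
    · obtain ⟨z, hzy, hlt⟩ := hdesc y hyN
      exact hlt.le.trans (ih _ (hy ▸ hzy) z rfl)

/-- There is `K ≥ 0` such that every partition with more than `K` interior points is beaten
by a partition with no more points; in particular the supremum defining the regularized
total variation is attained by some partition with at most `K` interior points. -/
theorem exists_optimal_partition (lam a b : ℝ) (hlam : 0 < lam) (hab : a < b) (f : ℝ → ℝ)
    (hf : ContinuousOn f (Icc a b)) :
    ∃ K : ℝ, 0 ≤ K ∧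
      (∀ P : RTVPartition a b, K < (P.k : ℝ) →
        ∃ Q : RTVPartition a b, Q.k ≤ P.k ∧ phiP lam a b f P < phiP lam a b f Q) ∧
      ∃ P : RTVPartition a b, (P.k : ℝ) ≤ K ∧ phiP lam a b f P = phiRTV lam a b f := by
  obtain ⟨δ, hδ, hδf⟩ := Metric.uniformContinuousOn_iff.mp
    (isCompact_Icc.uniformContinuousOn_of_continuous hf) (lam / 2) (half_pos hlam)
  set K := (b - a) / δ
  have hK : 0 ≤ K := div_nonneg (sub_nonneg.2 hab.le) hδ.le
  have hdesc := exists_phiP_lt_of_lt_k (f := f) hlam hab hδ hδf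
  obtain ⟨Q, hQk, hQ⟩ := exists_forall_k_le_phiP_le (f := f) hlam.le hab hf ⌊K⌋₊
  have hmax : ∀ P, phiP lam a b f P ≤ phiP lam a b f Q :=
    forall_le_of_forall_exists_lt hQ fun P hP => hdesc P ((Nat.floor_lt hK).mp hP)
  refine ⟨K, hK, fun P hP => (hdesc P hP).imp fun _ hR => ⟨hR.1.le, hR.2⟩,
    Q, (Nat.cast_le.mpr hQk).trans (Nat.floor_le hK), ?_⟩
  have : Nonempty (RTVPartition a b) := ⟨Q⟩
  exact le_antisymm (le_ciSup ⟨_, Set.forall_mem_range.mpr hmax⟩ Q) (ciSup_le hmax)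
end
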